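/- arXiv:1202.2463 — 2 statements merged into one kernel-verified Lean document; each statement's English description precedes it below -/
import Mathlib

section
/- If two ratios (N_1:D_1) and (N_2:D_2) of formal power series in K[[x]] are equivalent (i.e., N_1 D_2 - N_2 D_1 = 0), and (N_1:D_1) is nontrivial and K-algebraic along a linear subspace E, and (N_2:D_2) is nontrivial (some finite jet along E nonzero), then (N_2:D_2) is also K-algebraic along E. -/
/-- Algebraic power series over `K`. -/
def IsAlgPS {K : Type*} [Field K] {r : ℕ} (T : MvPowerSeries (Fin r) K) : Prop :=
  ∃ m : ℕ, 0 < m ∧ ∃ P : ℕ → MvPolynomial (Fin r) K, P m ≠ 0 ∧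
    ∑ j ∈ Finset.range (m + 1), (P j : MvPowerSeries (Fin r) K) * T ^ j = 0

/-- Degree of a multi-exponent in the block `S` of variables cutting out the coordinate
subspace `E = {x_i = 0 : i ∈ S}`. -/
def degS {r : ℕ} (S : Finset (Fin r)) (α : Fin r →₀ ℕ) : ℕ := ∑ i ∈ S, α i

/-- `(j^q T)|_E = 0` for the coordinate subspace `E` cut out by the variables in `S`. -/
def jVanish {K : Type*} [Field K] {r : ℕ} (S : Finset (Fin r)) (q : ℕ)
    (T : MvPowerSeries (Fin r) K) : Prop :=
  ∀ α : Fin r →₀ ℕ, degS S α ≤ q → MvPowerSeries.coeff α T = 0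

/-- `(j^ℓ (N, D))|_E ≠ 0`. -/
def jNonzero {K : Type*} [Field K] {r : ℕ} (S : Finset (Fin r)) (ℓ : ℕ)
    (N D : MvPowerSeries (Fin r) K) : Prop :=
  ∃ α : Fin r →₀ ℕ, degS S α ≤ ℓ ∧
    (MvPowerSeries.coeff α N ≠ 0 ∨ MvPowerSeries.coeff α D ≠ 0)

/-- Two ratios are `q`-similar along `E` if `(j^q (N D' - N' D))|_E = 0`. -/
def qSimilar {K : Type*} [Field K] {r : ℕ} (S : Finset (Fin r)) (q : ℕ)
    (N D N' D' : MvPowerSeries (Fin r) K) : Prop :=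
  jVanish S q (N * D' - N' * D)

/-- The ratio `(N : D)` is `K`-algebraic along `E`: there is `ℓ` and, for every `q`,
algebraic power series `N_q, D_q` such that `(N : D)` and `(N_q : D_q)` are `q`-similar
along `E` and `(j^ℓ (N_q, D_q))|_E ≠ 0`. -/
def KAlgAlong {K : Type*} [Field K] {r : ℕ} (S : Finset (Fin r))
    (N D : MvPowerSeries (Fin r) K) : Prop :=
  ∃ ℓ : ℕ, ∀ q : ℕ, ∃ Nq Dq : MvPowerSeries (Fin r) K,
    IsAlgPS Nq ∧ IsAlgPS Dq ∧ qSimilar S q N D Nq Dq ∧ jNonzero S ℓ Nq Dq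

/-!
Let `F₁` be a nonzero entry of `(N₁, D₁)` and `F₂` the matching entry of `(N₂, D₂)`. From
`N₁ D₂ = N₂ D₁` one gets `(N₁ D_q - N_q D₁) F₂ = F₁ (N₂ D_q - N_q D₂)`. The order of vanishing
along `E` is the weighted order giving weight one to the variables in `S` and zero to the others;
it is additive on products because `K[[x]]` is a domain. Hence if `(N₁ : D₁)` and `(N_q : D_q)`
are `(q + c)`-similar, where `c` is the order of `F₁`, then `(N₂ : D₂)` and `(N_q : D_q)` are
`q`-similar, and the approximants of `(N₁ : D₁)` serve for `(N₂ : D₂)` with the same `ℓ`.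
-/

open MvPowerSeries

section

variable {K : Type*} [Field K] {r : ℕ}

def weightS (S : Finset (Fin r)) : Fin r → ℕ := fun i => if i ∈ S then 1 else 0

lemma weight_weightS (S : Finset (Fin r)) (α : Fin r →₀ ℕ) :
    Finsupp.weight (weightS S) α = degS S α := by
  simp [Finsupp.weight_apply, Finsupp.sum_fintype, weightS, degS, Finset.sum_ite_mem]

lemma jVanish_iff_lt_weightedOrder {S : Finset (Fin r)} {q : ℕ} {T : MvPowerSeries (Fin r) K} :
    jVanish S q T ↔ (q : ℕ∞) < T.weightedOrder (weightS S) := by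
  refine ⟨fun h => ?_, fun h α hα => coeff_eq_zero_of_lt_weightedOrder (weightS S) ?_⟩
  · have := nat_le_weightedOrder (weightS S) (n := q + 1) (f := T) fun α hα =>
      h α (by rw [← weight_weightS]; omega)
    exact ENat.natCast_add_one_le_iff.mp (by exact_mod_cast this)
  · rw [weight_weightS]
    exact lt_of_le_of_lt (by exact_mod_cast hα) h

lemma jVanish_of_mul_eq {S : Finset (Fin r)} {q : ℕ} {A B F G : MvPowerSeries (Fin r) K}
    (hF : F ≠ 0) (heq : A * G = F * B)
    (hA : jVanish S (q + (F.weightedOrder (weightS S)).toNat) A) : jVanish S q B := by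
  set c := F.weightedOrder (weightS S)
  have hc : (c.toNat : ℕ∞) = c := (ne_zero_iff_weightedOrder_finite _).mp hF
  rw [jVanish_iff_lt_weightedOrder, Nat.cast_add, hc] at hA
  rw [jVanish_iff_lt_weightedOrder]
  have : c + q < c + B.weightedOrder (weightS S) := calc
    c + q = q + c := add_comm _ _
    _ < A.weightedOrder (weightS S) := hA
    _ ≤ A.weightedOrder (weightS S) + G.weightedOrder (weightS S) := le_self_add
    _ = c + B.weightedOrder (weightS S) := by rw [← weightedOrder_mul, heq, weightedOrder_mul]
  exact (ENat.add_lt_add_iff_left (hc ▸ ENat.natCast_ne_top _)).mp this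

lemma ne_zero_or_ne_zero_of_jNonzero {S : Finset (Fin r)} {ℓ : ℕ}
    {N D : MvPowerSeries (Fin r) K} (h : jNonzero S ℓ N D) : N ≠ 0 ∨ D ≠ 0 := by
  obtain ⟨α, -, hα⟩ := h
  exact hα.imp (fun hN h0 => hN (by simp [h0])) (fun hD h0 => hD (by simp [h0]))

lemma exists_add_qSimilar_imp_qSimilar_of_equivalent {S : Finset (Fin r)}
    {N₁ D₁ N₂ D₂ : MvPowerSeries (Fin r) K} (hequiv : N₁ * D₂ - N₂ * D₁ = 0)
    (hnz : N₁ ≠ 0 ∨ D₁ ≠ 0) :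
    ∃ c, ∀ q N D, qSimilar S (q + c) N₁ D₁ N D → qSimilar S q N₂ D₂ N D := by
  obtain ⟨F₁, F₂, hF₁, heq⟩ : ∃ F₁ F₂, F₁ ≠ 0 ∧
      ∀ N D, (N₁ * D - N * D₁) * F₂ = F₁ * (N₂ * D - N * D₂) := by
    rcases hnz with hN₁ | hD₁
    · exact ⟨N₁, N₂, hN₁, fun N D => by linear_combination N * hequiv⟩
    · exact ⟨D₁, D₂, hD₁, fun N D => by linear_combination D * hequiv⟩
  exact ⟨_, fun q N D h => jVanish_of_mul_eq hF₁ (heq N D) h⟩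

end

theorem kAlgebraic_of_equivalent_general {K : Type*} [Field K] {r : ℕ} (S : Finset (Fin r))
    (N₁ D₁ N₂ D₂ : MvPowerSeries (Fin r) K)
    (hequiv : N₁ * D₂ - N₂ * D₁ = 0)
    (h1nz : ∃ ℓ, jNonzero S ℓ N₁ D₁)
    (h1alg : KAlgAlong S N₁ D₁) :
    KAlgAlong S N₂ D₂ := by
  obtain ⟨ℓ, happrox⟩ := h1alg
  obtain ⟨ℓ₁, hnz₁⟩ := h1nz
  obtain ⟨c, hshift⟩ := exists_add_qSimilar_imp_qSimilar_of_equivalent (S := S) hequiv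
    (ne_zero_or_ne_zero_of_jNonzero hnz₁)
  refine ⟨ℓ, fun q => ?_⟩
  obtain ⟨Nq, Dq, hNq, hDq, hsim, hnz⟩ := happrox (q + c)
  exact ⟨Nq, Dq, hNq, hDq, hshift q Nq Dq hsim, hnz⟩

/-- If two ratios are equivalent, one of them nontrivial and `K`-algebraic along `E`,
and the other nontrivial, then the other is also `K`-algebraic along `E` (Remark 2.5). -/
theorem kAlgebraic_of_equivalent {K : Type*} [Field K] {r : ℕ} (S : Finset (Fin r))
    (N₁ D₁ N₂ D₂ : MvPowerSeries (Fin r) K)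
    (hequiv : N₁ * D₂ - N₂ * D₁ = 0)
    (h1nz : ∃ ℓ, jNonzero S ℓ N₁ D₁)
    (h1alg : KAlgAlong S N₁ D₁)
    (h2nz : ∃ ℓ, jNonzero S ℓ N₂ D₂) :
    KAlgAlong S N₂ D₂ :=
  kAlgebraic_of_equivalent_general S N₁ D₁ N₂ D₂ hequiv h1nz h1alg
end

section
/- With the iterated Segre mappings v_j as above and the inversion map I(t^{[j]}, s, u) defined by I = (t^{[j]}, U_j(t^j, t^{j-1}, ..., t^1, s, u)) for j odd (with the order of the t-variables reversed), and with conjugated U_j for j even, the following identities hold: v_j(I(t^{[j]}, s, u)) = (t^j, s, u) and I(t^{[j-1]}, v_j(t^{[j]}, s, u)) = (t^{[j]}, s, u). -/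
/-!
Unwinding the recursion, `U_m(t, ·)` is the chain of maps `Θ^{(k)}(t^{k+1}, t^k, ·)`,
`k = 1, …, m - 1`, where `Θ^{(k)}` is `Θ` or its conjugate `Θ̄` alternately and the outermost
step uses `Θ`. The second normality identity says that `Θ(z, χ, ·)` and `Θ̄(χ, z, ·)` are
inverse to each other, so the chain run along the reversed variables, with the roles of `Θ` and
`Θ̄` shifted by the parity of `m`, inverts `U_m(t, ·)`; this parity shift is exactly the
case distinction in the definition of `I`.
-/

/-- Points of `ℂ^k`. -/
abbrev Cv (k : ℕ) := Fin k → ℂ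

/-- The map with conjugated coefficients. -/
noncomputable def conjTheta {n d : ℕ} (Θ : Cv n → Cv n → Cv d → Cv d) :
    Cv n → Cv n → Cv d → Cv d :=
  fun z χ σ => star (Θ (star z) (star χ) (star σ))

/-- The iterated Segre mappings `v_j(t^{[j]}, s, u) = (t^j, U_j(t^{[j]}, s, u))`. -/
noncomputable def segre {n d : ℕ} (Θ : Cv n → Cv n → Cv d → Cv d) :
    (j : ℕ) → (Fin j → Cv n) → Cv d → Cv n × Cv d
  | 0, _, η => (0, η)
  | (j + 1), t, η =>
      (t (Fin.last j),
        Θ (t (Fin.last j))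
          (star ((segre Θ j (fun i => star (t i.castSucc)) (star η)).1))
          (star ((segre Θ j (fun i => star (t i.castSucc)) (star η)).2)))

/-- The map `U_j`, the second component of `v_j`. -/
noncomputable def Umap {n d : ℕ} (Θ : Cv n → Cv n → Cv d → Cv d) (j : ℕ)
    (t : Fin j → Cv n) (η : Cv d) : Cv d :=
  (segre Θ j t η).2

/-- The inversion map `I(t^{[j]}, s, u) = (t^{[j]}, U_j(t^j, …, t^1, s, u))` for `j` odd,
with conjugated `U_j` for `j` even. -/
noncomputable def Imap {n d : ℕ} (Θ : Cv n → Cv n → Cv d → Cv d) (j : ℕ)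
    (t : Fin j → Cv n) (η : Cv d) : (Fin j → Cv n) × Cv d :=
  (t, if j % 2 = 1 then Umap Θ j (fun i => t (Fin.rev i)) η
      else star (Umap Θ j (fun i => star (t (Fin.rev i))) (star η)))

namespace Segre

open Function

variable {n d : ℕ}

theorem conjTheta_involutive : Involutive (@conjTheta n d) := fun Θ => by
  funext z χ σ
  simp [conjTheta]

theorem conjTheta_iterate_two_mul_add (Θ : Cv n → Cv n → Cv d → Cv d) (k m : ℕ) :
    conjTheta^[2 * k + m] Θ = conjTheta^[m] Θ := by
  rw [iterate_add_apply, iterate_mul, involutive_iff_iter_2_eq_id.1 conjTheta_involutive,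
    iterate_id, id]

theorem conjTheta_iterate_iterate_self (Θ : Cv n → Cv n → Cv d → Cv d) (k : ℕ) :
    conjTheta^[k] (conjTheta^[k] Θ) = Θ := by
  rw [← iterate_add_apply, ← two_mul, ← add_zero (2 * k), conjTheta_iterate_two_mul_add,
    iterate_zero_apply]

theorem conjTheta_apply_zero {Θ : Cv n → Cv n → Cv d → Cv d} (h0 : ∀ z σ, Θ z 0 σ = σ)
    (z : Cv n) (σ : Cv d) : conjTheta Θ z 0 σ = σ := by
  simp [conjTheta, h0]

theorem conjTheta_apply_apply_swap {Θ : Cv n → Cv n → Cv d → Cv d}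
    (hinv : ∀ z χ η, Θ z χ (conjTheta Θ χ z η) = η) (z χ : Cv n) (η : Cv d) :
    conjTheta Θ z χ (Θ χ z η) = η := by
  simpa [conjTheta] using congrArg star (hinv (star z) (star χ) (star η))

theorem iterate_conjTheta_apply_zero {Θ : Cv n → Cv n → Cv d → Cv d}
    (h0 : ∀ z σ, Θ z 0 σ = σ) (k : ℕ) (z : Cv n) (σ : Cv d) : conjTheta^[k] Θ z 0 σ = σ := by
  induction k generalizing z σ with
  | zero => exact h0 z σ
  | succ k ih => rw [iterate_succ_apply']; exact conjTheta_apply_zero ih z σ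

theorem iterate_conjTheta_apply_conjTheta {Θ : Cv n → Cv n → Cv d → Cv d}
    (hinv : ∀ z χ η, Θ z χ (conjTheta Θ χ z η) = η) (k : ℕ) (z χ : Cv n) (η : Cv d) :
    conjTheta^[k] Θ z χ (conjTheta (conjTheta^[k] Θ) χ z η) = η := by
  induction k generalizing z χ η with
  | zero => exact hinv z χ η
  | succ k ih =>
    rw [iterate_succ_apply', conjTheta_involutive]
    exact conjTheta_apply_apply_swap ih z χ η

theorem segre_conjTheta (Θ : Cv n → Cv n → Cv d → Cv d) (j : ℕ) (t : Fin j → Cv n)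
    (η : Cv d) : segre (conjTheta Θ) j t η = star (segre Θ j (star t) (star η)) := by
  induction j generalizing η with
  | zero => simp [segre, Prod.star_def]
  | succ j ih => simp [segre, conjTheta, ih, Prod.star_def, Pi.star_def]

theorem Umap_conjTheta (Θ : Cv n → Cv n → Cv d → Cv d) (j : ℕ) (t : Fin j → Cv n)
    (η : Cv d) : Umap (conjTheta Θ) j t η = star (Umap Θ j (star t) (star η)) := by
  simp [Umap, segre_conjTheta, Prod.snd_star]

theorem Umap_one {Θ : Cv n → Cv n → Cv d → Cv d} (h0 : ∀ z σ, Θ z 0 σ = σ)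
    (t : Fin 1 → Cv n) (η : Cv d) : Umap Θ 1 t η = η := by
  simp [Umap, segre, h0]

theorem Umap_add_two_init (Θ : Cv n → Cv n → Cv d → Cv d) (j : ℕ) (t : Fin (j + 2) → Cv n)
    (η : Cv d) :
    Umap Θ (j + 2) t η =
      Θ (t (Fin.last (j + 1))) (t (Fin.last j).castSucc)
        (Umap (conjTheta Θ) (j + 1) (Fin.init t) η) := by
  rw [Umap_conjTheta]
  simp [Umap, segre, Fin.init]

theorem Umap_add_two_tail {Θ : Cv n → Cv n → Cv d → Cv d} (h0 : ∀ z σ, Θ z 0 σ = σ) (j : ℕ)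
    (t : Fin (j + 2) → Cv n) (η : Cv d) :
    Umap Θ (j + 2) t η = Umap Θ (j + 1) (Fin.tail t) (conjTheta^[j] Θ (t 1) (t 0) η) := by
  induction j generalizing Θ with
  | zero =>
    rw [Umap_add_two_init, Umap_one (conjTheta_apply_zero h0), Umap_one h0]
    rfl
  | succ j ih =>
    rw [Umap_add_two_init, ih (conjTheta_apply_zero h0), Umap_add_two_init, iterate_succ_apply]
    rfl

theorem Umap_rev_Umap {Θ : Cv n → Cv n → Cv d → Cv d} (h0 : ∀ z σ, Θ z 0 σ = σ)
    (hinv : ∀ z χ η, Θ z χ (conjTheta Θ χ z η) = η) (m : ℕ) (t : Fin m → Cv n) (η : Cv d) :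
    Umap (conjTheta^[m + 1] Θ) m (fun i => t i.rev) (Umap Θ m t η) = η := by
  induction m generalizing Θ with
  | zero => rfl
  | succ m ih =>
    rcases m with _ | k
    · rw [Umap_one h0, Umap_one (iterate_conjTheta_apply_zero h0 _)]
    have hrev_one : Fin.rev (1 : Fin (k + 2)) = (Fin.last k).castSucc := by
      rw [← Fin.succ_zero_eq_one, Fin.rev_succ, Fin.rev_zero]
    have hconj : conjTheta^[k] (conjTheta^[k + 3] Θ) = conjTheta Θ := by
      rw [← iterate_add_apply, show k + (k + 3) = 2 * (k + 1) + 1 by ring,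
        conjTheta_iterate_two_mul_add, iterate_one]
    have htail : Fin.tail (fun i => t i.rev) = fun i => Fin.init t i.rev := by
      funext i
      simp [Fin.tail, Fin.init, Fin.rev_succ]
    -- the innermost step of the reversed chain undoes the outermost step of `Umap Θ`
    rw [Umap_add_two_init Θ, Umap_add_two_tail (iterate_conjTheta_apply_zero h0 _), hrev_one,
      Fin.rev_zero, hconj, conjTheta_apply_apply_swap hinv, htail]
    simpa only [iterate_succ_apply] using
      ih (conjTheta_apply_zero h0) (iterate_conjTheta_apply_conjTheta hinv 1) (Fin.init t)

theorem Imap_snd (Θ : Cv n → Cv n → Cv d → Cv d) (m : ℕ) (t : Fin m → Cv n) (η : Cv d) :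
    (Imap Θ m t η).2 = Umap (conjTheta^[m + 1] Θ) m (fun i => t i.rev) η := by
  unfold Imap
  split_ifs with hm
  · rw [show m + 1 = 2 * ((m + 1) / 2) + 0 by omega, conjTheta_iterate_two_mul_add]
    rfl
  · rw [show m + 1 = 2 * (m / 2) + 1 by omega, conjTheta_iterate_two_mul_add, iterate_one,
      Umap_conjTheta]
    rfl

end Segre

open Segre in
theorem segre_inversion_general {n d : ℕ} (Θ : Cv n → Cv n → Cv d → Cv d)
    (hn1 : ∀ z σ, Θ z 0 σ = σ)
    (hreal : ∀ z χ η, Θ z χ (conjTheta Θ χ z η) = η) :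
    (∀ (j : ℕ) (t : Fin (j + 1) → Cv n) (η : Cv d),
      segre Θ (j + 1) t ((Imap Θ (j + 1) t η).2) = (t (Fin.last j), η)) ∧
    (∀ (j : ℕ) (t : Fin (j + 1) → Cv n) (η : Cv d),
      Imap Θ (j + 1) t ((segre Θ (j + 1) t η).2) = (t, η)) := by
  refine ⟨fun j t η => Prod.ext rfl ?_, fun j t η => Prod.ext rfl ?_⟩
  · have h := Umap_rev_Umap (iterate_conjTheta_apply_zero hn1 (j + 2))
      (iterate_conjTheta_apply_conjTheta hreal (j + 2)) (j + 1) (fun i => t i.rev) η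
    rw [conjTheta_iterate_iterate_self] at h
    simp only [Fin.rev_rev] at h
    rw [Imap_snd]
    exact h
  · rw [Imap_snd]
    exact Umap_rev_Umap hn1 hreal (j + 1) t η

/-- The identities `v_j(I(t^{[j]}, s, u)) = (t^j, s, u)` and
`I(t^{[j-1]}, v_j(t^{[j]}, s, u)) = (t^{[j]}, s, u)`. -/
theorem segre_inversion {n d : ℕ} (Θ : Cv n → Cv n → Cv d → Cv d)
    (hn1 : ∀ z σ, Θ z 0 σ = σ) (hn2 : ∀ χ σ, Θ 0 χ σ = σ)
    (hreal : ∀ z χ η, Θ z χ (conjTheta Θ χ z η) = η) :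
    (∀ (j : ℕ) (t : Fin (j + 1) → Cv n) (η : Cv d),
      segre Θ (j + 1) t ((Imap Θ (j + 1) t η).2) = (t (Fin.last j), η)) ∧
    (∀ (j : ℕ) (t : Fin (j + 1) → Cv n) (η : Cv d),
      Imap Θ (j + 1) t ((segre Θ (j + 1) t η).2) = (t, η)) :=
  segre_inversion_general Θ hn1 hreal
end
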